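/- Every Arnoux-Rauzy word of order m satisfies property R_m, i.e., every factor has exactly m return words. -/
import Mathlib


variable {A : Type*}

/-- The factor of `u` of length `n` starting at position `j`. -/
def factorAt (u : ℕ → A) (j n : ℕ) : List A :=
  (List.range n).map (fun i => u (j + i))

/-- `j` is an occurrence of the finite word `w` in `u`. -/
def OccursAt (u : ℕ → A) (w : List A) (j : ℕ) : Prop :=
  factorAt u j w.length = w

/-- `w` is a factor of the infinite word `u`. -/
def IsFactor (u : ℕ → A) (w : List A) : Prop :=
  ∃ j, OccursAt u w j

/-- `v` is a return word of `w` in `u`: the word between two successive occurrences of `w`. -/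
def IsReturnWord (u : ℕ → A) (w v : List A) : Prop :=
  ∃ j k, j < k ∧ OccursAt u w j ∧ OccursAt u w k ∧
    (∀ l, j < l → l < k → ¬ OccursAt u w l) ∧ v = factorAt u j (k - j)

/-- The set `R(w)` of return words of `w` in `u`. -/
def returnWords (u : ℕ → A) (w : List A) : Set (List A) :=
  {v | IsReturnWord u w v}

/-- Property `R_m`: every factor of `u` has exactly `m` return words. -/
def PropertyR (u : ℕ → A) (m : ℕ) : Prop :=
  ∀ w, IsFactor u w → (returnWords u w).Finite ∧ (returnWords u w).ncard = m

/-- The set of left extensions of `w`. -/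
def leftExt (u : ℕ → A) (w : List A) : Set A := {a | IsFactor u (a :: w)}

/-- The set of right extensions of `w`. -/
def rightExt (u : ℕ → A) (w : List A) : Set A := {b | IsFactor u (w ++ [b])}

def LeftSpecial (u : ℕ → A) (w : List A) : Prop := 2 ≤ (leftExt u w).ncard

def RightSpecial (u : ℕ → A) (w : List A) : Prop := 2 ≤ (rightExt u w).ncard

/-- The set of pairs `(a, b)` such that `a w b` is a factor of `u`. -/
def extPairs (u : ℕ → A) (w : List A) : Set (A × A) :=
  {p | IsFactor u (p.1 :: (w ++ [p.2]))}

/-- The bilateral order `B(w)`. -/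
noncomputable def bilateralOrder (u : ℕ → A) (w : List A) : ℤ :=
  ((extPairs u w).ncard : ℤ) - (leftExt u w).ncard - (rightExt u w).ncard + 1

/-- `w` is a weak bispecial factor of `u`. -/
def WeakBispecial (u : ℕ → A) (w : List A) : Prop :=
  IsFactor u w ∧ bilateralOrder u w < 0

/-- The factor complexity of `u`. -/
noncomputable def Complexity (u : ℕ → A) (n : ℕ) : ℕ :=
  {w : List A | w.length = n ∧ IsFactor u w}.ncard

/-- `u` is recurrent: every factor occurs at least twice. -/
def Recurrent (u : ℕ → A) : Prop :=
  ∀ w, IsFactor u w → ∃ j k, j < k ∧ OccursAt u w j ∧ OccursAt u w k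

/-- `u` is uniformly recurrent. -/
def UniformlyRecurrent (u : ℕ → A) : Prop :=
  ∀ n : ℕ, ∃ N : ℕ, ∀ w, IsFactor u w → w.length = N →
    ∀ v, IsFactor u v → v.length = n → v <:+: w

def EventuallyPeriodic (u : ℕ → A) : Prop :=
  ∃ p, 0 < p ∧ ∃ N, ∀ n, N ≤ n → u (n + p) = u n

/-- `w` is a maximal right special factor. -/
def MaximalRightSpecial (u : ℕ → A) (w : List A) : Prop :=
  IsFactor u w ∧ RightSpecial u w ∧
    ∀ v, IsFactor u v → RightSpecial u v → w <:+ v → v = w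

/-- The return word `v` of `w` starts with the letter `b`. -/
def StartsWithLetter (w v : List A) (b : A) : Prop := (w ++ [b]) <+: (v ++ w)
/-- An Arnoux-Rauzy word of order `m`: a uniformly recurrent word which, for every `n`,
has exactly one right special factor of length `n`, with `m` right extensions, and
exactly one left special factor of length `n`, with `m` left extensions. -/
def ArnouxRauzy (u : ℕ → A) (m : ℕ) : Prop :=
  UniformlyRecurrent u ∧
    ∀ n : ℕ,
      (∃! w, IsFactor u w ∧ w.length = n ∧ RightSpecial u w) ∧
      (∀ w, IsFactor u w → w.length = n → RightSpecial u w → (rightExt u w).ncard = m) ∧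
      (∃! w, IsFactor u w ∧ w.length = n ∧ LeftSpecial u w) ∧
      (∀ w, IsFactor u w → w.length = n → LeftSpecial u w → (leftExt u w).ncard = m)

section Aux

variable {u : ℕ → A}

@[simp] lemma factorAt_length (u : ℕ → A) (j n : ℕ) : (factorAt u j n).length = n := by
  simp [factorAt]

lemma factorAt_getElem (u : ℕ → A) {j n i : ℕ} (h : i < n) :
    (factorAt u j n)[i]'(by simpa using h) = u (j + i) := by
  simp [factorAt]

lemma factorAt_append (u : ℕ → A) (j a b : ℕ) :
    factorAt u j (a + b) = factorAt u j a ++ factorAt u (j + a) b := by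
  apply List.ext_getElem (by simp)
  intro i h1 h2
  rcases Nat.lt_or_ge i a with h | h
  · rw [List.getElem_append_left (by simpa using h)]
    have hib : i < a + b := by simpa using h1
    rw [factorAt_getElem u hib, factorAt_getElem u h]
  · rw [List.getElem_append_right (by simpa using h)]
    have hib : i < a + b := by simpa using h1
    have hib2 : i - (factorAt u j a).length < b := by simp; omega
    rw [factorAt_getElem u hib, factorAt_getElem u hib2]
    congr 1
    simp
    omega

lemma occursAt_iff {w : List A} {j : ℕ} :
    OccursAt u w j ↔ ∀ i (h : i < w.length), u (j + i) = w[i] := by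
  constructor
  · intro h i hi
    have h2 := factorAt_getElem u (j := j) (n := w.length) hi
    rw [← h2]
    exact List.getElem_of_eq h (by simpa using hi)
  · intro h
    apply List.ext_getElem (by simp)
    intro i h1 h2
    rw [factorAt_getElem u (by simpa using h1)]
    exact h i h2

lemma occursAt_factorAt (u : ℕ → A) (j n : ℕ) : OccursAt u (factorAt u j n) j := by
  unfold OccursAt
  rw [factorAt_length]


lemma occursAt_append {w v : List A} {j : ℕ} :
    OccursAt u (w ++ v) j ↔ OccursAt u w j ∧ OccursAt u v (j + w.length) := by
  unfold OccursAt
  rw [List.length_append, factorAt_append]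
  constructor
  · intro h
    have := List.append_inj h (by simp)
    exact ⟨this.1, this.2⟩
  · intro h
    rw [h.1, h.2]

lemma occursAt_singleton {b : A} {x : ℕ} : OccursAt u [b] x ↔ u x = b := by
  unfold OccursAt factorAt
  simp [List.range_succ]

/-- In a uniformly recurrent word, every factor occurs at arbitrarily late positions. -/
lemma exists_occursAt_ge (hur : UniformlyRecurrent u) {v : List A} (hv : IsFactor u v)
    (p : ℕ) : ∃ q, p ≤ q ∧ OccursAt u v q := by
  obtain ⟨N, hN⟩ := hur v.length
  have hinf : v <:+: factorAt u p N :=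
    hN _ ⟨p, occursAt_factorAt u p N⟩ (factorAt_length u p N) v hv rfl
  obtain ⟨s, t, hst⟩ := hinf
  refine ⟨p + s.length, by omega, ?_⟩
  have hlen : s.length + v.length + t.length = N := by
    have := congrArg List.length hst
    simp at this
    omega
  rw [occursAt_iff]
  intro i hi
  have h1 : s.length + i < N := by omega
  have h2 := factorAt_getElem u (j := p) h1
  rw [List.getElem_of_eq hst.symm (by simpa using h1)] at h2
  rw [List.getElem_append_left (by simp; omega)] at h2
  rw [List.getElem_append_right (by simp)] at h2
  simp only [Nat.add_sub_cancel_left] at h2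
  rw [h2]
  congr 1
  omega

/-- Next occurrence after a given occurrence. -/
lemma exists_next_occ (hur : UniformlyRecurrent u) {w : List A} (hw : IsFactor u w)
    {j : ℕ} (hj : OccursAt u w j) :
    ∃ k, j < k ∧ OccursAt u w k ∧ ∀ l, j < l → l < k → ¬ OccursAt u w l := by
  have hne : {k | j < k ∧ OccursAt u w k}.Nonempty := by
    obtain ⟨q, hq1, hq2⟩ := exists_occursAt_ge hur hw (j + 1)
    exact ⟨q, by omega, hq2⟩
  set k := sInf {k | j < k ∧ OccursAt u w k} with hk
  have hmem := Nat.sInf_mem hne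
  refine ⟨k, hmem.1, hmem.2, ?_⟩
  intro l hl1 hl2 hocc
  have hmem2 : l ∈ {k | j < k ∧ OccursAt u w k} := ⟨hl1, hocc⟩
  have := Nat.sInf_le hmem2
  omega

lemma mem_rightExt_of_occ {w : List A} {j : ℕ} (hj : OccursAt u w j) :
    u (j + w.length) ∈ rightExt u w := by
  refine ⟨j, ?_⟩
  rw [occursAt_append]
  exact ⟨hj, occursAt_singleton.mpr rfl⟩

/-- Determinism off right-special factors. -/
lemma next_letter_eq [Finite A] {v : List A} (hv : ¬ RightSpecial u v)
    {x y : ℕ} (hx : OccursAt u v x) (hy : OccursAt u v y) :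
    u (x + v.length) = u (y + v.length) := by
  by_contra hne
  refine hv ?_
  unfold RightSpecial
  rw [show (2 : ℕ) = 1 + 1 from rfl, Nat.add_one_le_iff, Set.one_lt_ncard_iff (Set.toFinite _)]
  exact ⟨_, _, mem_rightExt_of_occ hx, mem_rightExt_of_occ hy, hne⟩



/-- Synchronization: blocks after occurrences of the unique right-special factor
followed by the same letter evolve identically. -/
lemma sync_aux [Finite A] {w : List A}
    (huniq : ∀ v, IsFactor u v → v.length = w.length → RightSpecial u v → v = w)
    {j j' k k' : ℕ} (hj : OccursAt u w j) (hj' : OccursAt u w j')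
    (hb : u (j + w.length) = u (j' + w.length))
    (hjk : j < k) (hjk' : j' < k')
    (hbet : ∀ l, j < l → l < k → ¬ OccursAt u w l) :
    ∀ s, s ≤ k - j → s ≤ k' - j' → ∀ i, i < w.length + s → u (j + i) = u (j' + i) := by
  intro s
  induction s with
  | zero =>
    intro _ _ i hi
    simp only [Nat.add_zero] at hi
    rw [occursAt_iff] at hj hj'
    exact (hj i hi).trans (hj' i hi).symm
  | succ s ih =>
    intro hs hs' i hi
    rcases Nat.lt_or_ge i (w.length + s) with hlt | hge
    · exact ih (by omega) (by omega) i hlt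
    have hieq : i = w.length + s := by omega
    subst hieq
    rcases Nat.eq_zero_or_pos s with hs0 | hspos
    · subst hs0
      simpa using hb
    · set z := factorAt u (j + s) w.length with hz
      have hz1 : OccursAt u z (j + s) := occursAt_factorAt u (j + s) w.length
      have hz2 : OccursAt u z (j' + s) := by
        rw [occursAt_iff]
        intro i' hi'
        have hi'2 : i' < w.length := by simpa [hz] using hi'
        rw [show z[i']'hi' = u (j + s + i') from factorAt_getElem u hi'2]
        have := ih (by omega) (by omega) (s + i') (by omega)
        rw [show j' + s + i' = j' + (s + i') from by omega,
            show j + s + i' = j + (s + i') from by omega]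
        exact this.symm
      have hzn : ¬ RightSpecial u z := by
        intro hRS
        have hzw : z = w := huniq z ⟨j + s, hz1⟩ (by simp [hz]) hRS
        rw [hzw] at hz1
        exact hbet (j + s) (by omega) (by omega) hz1
      have hnext := next_letter_eq hzn hz1 hz2
      have hzl : z.length = w.length := by simp [hz]
      rw [hzl] at hnext
      rw [show j + (w.length + s) = j + s + w.length from by omega,
          show j' + (w.length + s) = j' + s + w.length from by omega]
      exact hnext

lemma sync_diff [Finite A] {w : List A}
    (huniq : ∀ v, IsFactor u v → v.length = w.length → RightSpecial u v → v = w)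
    {j j' k k' : ℕ} (hj : OccursAt u w j) (hj' : OccursAt u w j')
    (hb : u (j + w.length) = u (j' + w.length))
    (hjk : j < k) (hjk' : j' < k') (hk : OccursAt u w k)
    (hbet : ∀ l, j < l → l < k → ¬ OccursAt u w l)
    (hbet' : ∀ l, j' < l → l < k' → ¬ OccursAt u w l)
    (hle : k - j ≤ k' - j') : k' - j' ≤ k - j := by
  by_contra hlt
  have hd : j' + (k - j) < k' := by omega
  have hocc : OccursAt u w (j' + (k - j)) := by
    rw [occursAt_iff]
    intro i hi
    have h1 := sync_aux huniq hj hj' hb hjk hjk' hbet (k - j) le_rfl hle ((k - j) + i) (by omega)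
    rw [show j' + (k - j) + i = j' + ((k - j) + i) from by omega, ← h1,
        show j + ((k - j) + i) = k + i from by omega]
    rw [occursAt_iff] at hk
    exact hk i hi
  exact hbet' (j' + (k - j)) (by omega) hd hocc

lemma sync [Finite A] {w : List A}
    (huniq : ∀ v, IsFactor u v → v.length = w.length → RightSpecial u v → v = w)
    {j j' k k' : ℕ} (hj : OccursAt u w j) (hj' : OccursAt u w j')
    (hb : u (j + w.length) = u (j' + w.length))
    (hjk : j < k) (hjk' : j' < k') (hk : OccursAt u w k) (hk' : OccursAt u w k')
    (hbet : ∀ l, j < l → l < k → ¬ OccursAt u w l)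
    (hbet' : ∀ l, j' < l → l < k' → ¬ OccursAt u w l) :
    k - j = k' - j' ∧ factorAt u j (k - j) = factorAt u j' (k' - j') := by
  have heq : k - j = k' - j' := by
    rcases Nat.le_total (k - j) (k' - j') with h | h
    · exact le_antisymm h (sync_diff huniq hj hj' hb hjk hjk' hk hbet hbet' h)
    · exact (sync_diff huniq hj' hj hb.symm hjk' hjk hk' hbet' hbet h).antisymm h
  refine ⟨heq, ?_⟩
  rw [← heq]
  apply List.ext_getElem (by simp)
  intro i h1 h2
  rw [factorAt_getElem u (by simpa using h1), factorAt_getElem u (by simpa using h2)]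
  exact sync_aux huniq hj hj' hb hjk hjk' hbet (k - j) le_rfl (by omega) i
    (by simp at h1; omega)

/-- The core count: a right-special factor has exactly `m` return words. -/
lemma core_count [Finite A] {m : ℕ} (hAR : ArnouxRauzy u m) {w : List A}
    (hw : IsFactor u w) (hRS : RightSpecial u w) :
    (returnWords u w).Finite ∧ (returnWords u w).ncard = m := by
  obtain ⟨⟨r, hr, hruniq⟩, hcard, -, -⟩ := hAR.2 w.length
  have huniq : ∀ v, IsFactor u v → v.length = w.length → RightSpecial u v → v = w := by
    intro v h1 h2 h3
    exact (hruniq v ⟨h1, h2, h3⟩).trans (hruniq w ⟨hw, rfl, hRS⟩).symm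
  have hm := hcard w hw rfl hRS
  set f : List A → A := fun v => (v ++ w).getD w.length (u 0) with hf
  have hval : ∀ j k, j < k → OccursAt u w j → OccursAt u w k →
      f (factorAt u j (k - j)) = u (j + w.length) := by
    intro j k hjk hj hk
    have happ : factorAt u j (k - j) ++ w = factorAt u j ((k - j) + w.length) := by
      rw [factorAt_append]
      congr 1
      rw [show j + (k - j) = k from by omega]
      exact hk.symm
    show (factorAt u j (k - j) ++ w).getD w.length (u 0) = u (j + w.length)
    rw [happ, List.getD_eq_getElem _ _ (by simp; omega)]
    exact factorAt_getElem u (by omega)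
  have hbij : Set.BijOn f (returnWords u w) (rightExt u w) := by
    refine ⟨?_, ?_, ?_⟩
    · rintro v ⟨j, k, h1, h2, h3, h4, rfl⟩
      rw [hval j k h1 h2 h3]
      exact mem_rightExt_of_occ h2
    · rintro v ⟨j, k, h1, h2, h3, h4, rfl⟩ v' ⟨j', k', h1', h2', h3', h4', rfl⟩ heq
      rw [hval j k h1 h2 h3, hval j' k' h1' h2' h3'] at heq
      exact (sync huniq h2 h2' heq h1 h1' h3 h3' h4 h4').2
    · rintro b ⟨x, hx⟩
      rw [occursAt_append] at hx
      obtain ⟨k, hk1, hk2, hk3⟩ := exists_next_occ hAR.1 hw hx.1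
      refine ⟨factorAt u x (k - x), ⟨x, k, hk1, hx.1, hk2, hk3, rfl⟩, ?_⟩
      rw [hval x k hk1 hx.1 hk2]
      exact occursAt_singleton.mp hx.2
  have hfin : (returnWords u w).Finite :=
    Set.Finite.of_finite_image (by rw [hbij.image_eq]; exact Set.toFinite _) hbij.injOn
  refine ⟨hfin, ?_⟩
  rw [← hm, ← hbij.image_eq, Set.ncard_image_of_injOn hbij.injOn]



/-- If `w` is not right special, it has the same return words as a one-letter right
extension. -/
lemma step_ext [Finite A] {w : List A} {b : A} (hw : IsFactor u w)
    (hn : ¬ RightSpecial u w) (hwb : IsFactor u (w ++ [b])) :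
    returnWords u w = returnWords u (w ++ [b]) := by
  obtain ⟨x, hx⟩ := hwb
  have hocc : ∀ l, OccursAt u w l ↔ OccursAt u (w ++ [b]) l := by
    intro l
    constructor
    · intro h
      rw [occursAt_append]
      have hx2 := occursAt_append.mp hx
      refine ⟨h, occursAt_singleton.mpr ?_⟩
      rw [next_letter_eq hn h hx2.1]
      exact occursAt_singleton.mp hx2.2
    · intro h
      exact (occursAt_append.mp h).1
  ext v
  simp only [returnWords, IsReturnWord, Set.mem_setOf_eq]
  constructor
  · rintro ⟨j, k, h1, h2, h3, h4, h5⟩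
    exact ⟨j, k, h1, (hocc j).mp h2, (hocc k).mp h3,
      fun l hl1 hl2 hl3 => h4 l hl1 hl2 ((hocc l).mpr hl3), h5⟩
  · rintro ⟨j, k, h1, h2, h3, h4, h5⟩
    exact ⟨j, k, h1, (hocc j).mpr h2, (hocc k).mpr h3,
      fun l hl1 hl2 hl3 => h4 l hl1 hl2 ((hocc l).mp hl3), h5⟩

/-- Every factor of an Arnoux–Rauzy word has a right-special extension. -/
lemma exists_rs_ext [Finite A] {m : ℕ} (hAR : ArnouxRauzy u m) {w : List A}
    (hw : IsFactor u w) :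
    ∃ z, IsFactor u z ∧ RightSpecial u z ∧ w <+: z := by
  by_contra hno
  push_neg at hno
  obtain ⟨j, hj⟩ := hw
  obtain ⟨k, hk1, hk2⟩ := exists_occursAt_ge hAR.1 ⟨j, hj⟩ (j + 1)
  have hjk : j < k := by omega
  have hq : ∀ s, ∀ i, i < w.length + s → u (j + i) = u (k + i) := by
    intro s
    induction s with
    | zero =>
      intro i hi
      simp only [Nat.add_zero] at hi
      rw [occursAt_iff] at hj hk2
      exact (hj i hi).trans (hk2 i hi).symm
    | succ s ih =>
      intro i hi
      rcases Nat.lt_or_ge i (w.length + s) with hlt | hge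
      · exact ih i hlt
      have hieq : i = w.length + s := by omega
      subst hieq
      set z := factorAt u j (w.length + s) with hz
      have hz1 : OccursAt u z j := occursAt_factorAt u j (w.length + s)
      have hz2 : OccursAt u z k := by
        rw [occursAt_iff]
        intro i' hi'
        have hi'2 : i' < w.length + s := by simpa [hz] using hi'
        rw [show z[i']'hi' = u (j + i') from factorAt_getElem u hi'2]
        exact (ih i' hi'2).symm
      have hpre : w <+: z := by
        have h1 : z = factorAt u j w.length ++ factorAt u (j + w.length) s :=
          factorAt_append u j w.length s
        rw [h1, hj]
        exact ⟨factorAt u (j + w.length) s, rfl⟩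
      have hzn : ¬ RightSpecial u z := fun hRS => hno z ⟨j, hz1⟩ hRS hpre
      have hnext := next_letter_eq hzn hz1 hz2
      have hzl : z.length = w.length + s := by simp [hz]
      rw [hzl] at hnext
      exact hnext
  have hper : ∀ x, j ≤ x → u (x + (k - j)) = u x := by
    intro x hx
    have h1 := hq (x - j + 1) (x - j) (by omega)
    rw [show j + (x - j) = x from by omega,
        show k + (x - j) = x + (k - j) from by omega] at h1
    exact h1.symm
  obtain ⟨⟨r, ⟨hrF, hrlen, hrRS⟩, -⟩, -, -, -⟩ := hAR.2 (k - j)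
  have h2 : 1 < (rightExt u r).ncard := hrRS
  rw [Set.one_lt_ncard_iff (Set.toFinite _)] at h2
  obtain ⟨b1, b2, hb1, hb2, hbne⟩ := h2
  obtain ⟨x1, hx1ge, hx1⟩ := exists_occursAt_ge hAR.1 hb1 j
  obtain ⟨x2, hx2ge, hx2⟩ := exists_occursAt_ge hAR.1 hb2 j
  rw [occursAt_append] at hx1 hx2
  have hpos : 0 < r.length := by omega
  apply hbne
  have e1 : u (x1 + r.length) = b1 := occursAt_singleton.mp hx1.2
  have e2 : u (x2 + r.length) = b2 := occursAt_singleton.mp hx2.2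
  rw [← e1, ← e2, hrlen, hper x1 hx1ge, hper x2 hx2ge]
  have g1 := occursAt_iff.mp hx1.1 0 hpos
  have g2 := occursAt_iff.mp hx2.1 0 hpos
  simp only [Nat.add_zero] at g1 g2
  rw [g1, g2]

lemma climb [Finite A] {m : ℕ} (hAR : ArnouxRauzy u m) :
    ∀ d w, IsFactor u w →
      (∃ z, IsFactor u z ∧ RightSpecial u z ∧ w <+: z ∧ z.length ≤ w.length + d) →
      (returnWords u w).Finite ∧ (returnWords u w).ncard = m := by
  intro d
  induction d with
  | zero =>
    rintro w hw ⟨z, hz1, hz2, hz3, hz4⟩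
    have hwz : w = z := hz3.eq_of_length (le_antisymm hz3.length_le (by omega))
    exact core_count hAR hw (hwz ▸ hz2)
  | succ d ih =>
    rintro w hw ⟨z, hz1, hz2, hz3, hz4⟩
    by_cases hRS : RightSpecial u w
    · exact core_count hAR hw hRS
    · have hne : w ≠ z := fun h => hRS (h ▸ hz2)
      obtain ⟨e, rfl⟩ := hz3
      have he : e ≠ [] := by rintro rfl; simp at hne
      obtain ⟨c, rest, rfl⟩ := List.exists_cons_of_ne_nil he
      have hwc : IsFactor u (w ++ [c]) := by
        obtain ⟨y, hy⟩ := hz1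
        rw [show w ++ c :: rest = (w ++ [c]) ++ rest from by simp] at hy
        exact ⟨y, (occursAt_append.mp hy).1⟩
      rw [step_ext hw hRS hwc]
      apply ih (w ++ [c]) hwc
      refine ⟨w ++ c :: rest, hz1, hz2, ⟨rest, by simp⟩, ?_⟩
      simp only [List.length_append, List.length_cons] at hz4 ⊢
      simp
      omega

end Aux


/-- Every Arnoux-Rauzy word of order `m` satisfies property `R_m`. -/
theorem arnouxRauzy_propertyR [Fintype A] (u : ℕ → A) (m : ℕ)
    (h : ArnouxRauzy u m) : PropertyR u m := by
  intro w hw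
  obtain ⟨z, hz1, hz2, hz3⟩ := exists_rs_ext h hw
  exact climb h (z.length - w.length) w hw
    ⟨z, hz1, hz2, hz3, by have := hz3.length_le; omega⟩
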